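/- arXiv:1511.00899 — 3 statements merged into one kernel-verified Lean document; each statement's English description precedes it below -/
import Mathlib

section
/- Suppose the Neumann problem u''+a·u=σ, u'(0)=u'(T)=0 on [0,T] and the periodic problem v''+ã·v=σ̃, v(0)=v(2T), v'(0)=v'(2T) on [0,2T] (with ã the even extension of a about t=T) are both uniquely solvable for every L¹ right-hand side, with Green's functions G_N and G_P respectively. Then G_N(t,s) = G_P(t,s) + G_P(t, 2T−s) for all (t,s) ∈ [0,T]×[0,T]. -/
open Set MeasureTheory intervalIntegral

noncomputable def evenExt (T : ℝ) (f : ℝ → ℝ) : ℝ → ℝ :=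
  fun t => if t ≤ T then f t else f (2 * T - t)

noncomputable def oddExt (T : ℝ) (f : ℝ → ℝ) : ℝ → ℝ :=
  fun t => if t ≤ T then f t else -f (2 * T - t)

/-- `u` is a Carathéodory (W^{2,1}) solution of `u'' + a u = σ` on `[0, L]`:
`u` is `C¹` with derivative `u'`, and `u'` is absolutely continuous, being the
indefinite integral of `σ - a u` (so `u'' + a u = σ` a.e.). -/
def IsSolIcc (a σ : ℝ → ℝ) (L : ℝ) (u u' : ℝ → ℝ) : Prop :=
  (∀ t ∈ Icc (0:ℝ) L, HasDerivAt u (u' t) t) ∧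
  (∀ t ∈ Icc (0:ℝ) L, u' t = u' 0 + ∫ s in (0:ℝ)..t, (σ s - a s * u s))

def PeriodicBC (L : ℝ) : (ℝ → ℝ) → (ℝ → ℝ) → Prop :=
  fun u u' => u 0 = u L ∧ u' 0 = u' L

def AntiperiodicBC (L : ℝ) : (ℝ → ℝ) → (ℝ → ℝ) → Prop :=
  fun u u' => u 0 = -u L ∧ u' 0 = -u' L

def NeumannBC (L : ℝ) : (ℝ → ℝ) → (ℝ → ℝ) → Prop :=
  fun _ u' => u' 0 = 0 ∧ u' L = 0

def DirichletBC (L : ℝ) : (ℝ → ℝ) → (ℝ → ℝ) → Prop :=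
  fun u _ => u 0 = 0 ∧ u L = 0

def Mixed1BC (L : ℝ) : (ℝ → ℝ) → (ℝ → ℝ) → Prop :=
  fun u u' => u' 0 = 0 ∧ u L = 0

def Mixed2BC (L : ℝ) : (ℝ → ℝ) → (ℝ → ℝ) → Prop :=
  fun u u' => u 0 = 0 ∧ u' L = 0

/-- `G` is the Green's function of `u'' + a u = σ` on `[0, L]` with the boundary
conditions `BC`: for every integrable right-hand side `σ`, the function
`t ↦ ∫₀^L G(t,s) σ(s) ds` is a solution of the boundary value problem, and the
solution is unique (on `[0,L]`). -/
def IsGreen (a : ℝ → ℝ) (L : ℝ)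
    (BC : (ℝ → ℝ) → (ℝ → ℝ) → Prop) (G : ℝ → ℝ → ℝ) : Prop :=
  ∀ σ : ℝ → ℝ, IntervalIntegrable σ volume 0 L →
    (∃ w', IsSolIcc a σ L (fun t => ∫ s in (0:ℝ)..L, G t s * σ s) w' ∧
        BC (fun t => ∫ s in (0:ℝ)..L, G t s * σ s) w') ∧
    (∀ u₁ u₁' u₂ u₂', IsSolIcc a σ L u₁ u₁' → BC u₁ u₁' →
        IsSolIcc a σ L u₂ u₂' → BC u₂ u₂' → ∀ t ∈ Icc (0:ℝ) L, u₁ t = u₂ t)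

/-- `lam` is an eigenvalue of `u'' + (a + lam) u = 0` on `[0, L]` with boundary
conditions `BC`: there is a nontrivial W^{2,1} solution. -/
def IsEigen (a : ℝ → ℝ) (L : ℝ)
    (BC : (ℝ → ℝ) → (ℝ → ℝ) → Prop) (lam : ℝ) : Prop :=
  ∃ u u' : ℝ → ℝ, IsSolIcc (fun t => a t + lam) (fun _ => 0) L u u' ∧ BC u u' ∧
    ∃ t ∈ Icc (0:ℝ) L, u t ≠ 0


/-!
Let `v` solve the periodic problem on `[0, 2T]` with the even extensions `ã`, `σ̃`. Since the
equation is invariant under `t ↦ 2T - t`, so is the problem, and uniqueness forces `v` to be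
symmetric about `T`. Then `v'` is odd about `T`, so `v'(T) = 0`, and periodicity of `v'` gives
`v'(0) = 0`: the restriction of `v` to `[0, T]` solves the Neumann problem. Comparing the two
integral representations of this solution, and folding `[T, 2T]` onto `[0, T]`, gives
`∫ G_N(t,s) σ(s) ds = ∫ (G_P(t,s) + G_P(t,2T-s)) σ(s) ds` for every `σ ∈ L¹(0,T)`. Both
kernels are continuous in `s`, so testing with `σ` their difference gives the pointwise identity.
-/

section EvenExt

variable {T : ℝ} {f : ℝ → ℝ}

lemma evenExt_of_le {t : ℝ} (ht : t ≤ T) : evenExt T f t = f t := if_pos ht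

lemma evenExt_two_mul_sub (t : ℝ) : evenExt T f (2 * T - t) = evenExt T f t := by
  unfold evenExt
  split_ifs with h₁ h₂ h₂
  · congr 1; linarith
  · rfl
  · congr 1; ring
  · linarith

lemma evenExt_two_mul_sub_of_le {t : ℝ} (ht : t ≤ T) : evenExt T f (2 * T - t) = f t := by
  rw [evenExt_two_mul_sub, evenExt_of_le ht]

lemma intervalIntegrable_evenExt (hT : 0 ≤ T) (hf : IntervalIntegrable f volume 0 T) :
    IntervalIntegrable (evenExt T f) volume 0 (2 * T) := by
  have hleft : IntervalIntegrable (evenExt T f) volume 0 T := by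
    refine (intervalIntegrable_congr (g := f) fun s hs => ?_).mpr hf
    rw [uIoc_of_le hT] at hs
    exact evenExt_of_le hs.2
  have hright : IntervalIntegrable (evenExt T f) volume T (2 * T) := by
    have hrefl := (hf.comp_sub_left (2 * T)).symm
    rw [show 2 * T - T = T by ring, sub_zero] at hrefl
    refine (intervalIntegrable_congr (g := fun s => f (2 * T - s)) fun s hs => ?_).mpr hrefl
    rw [uIoc_of_le (by linarith)] at hs
    exact if_neg (not_le.mpr hs.1)
  exact hleft.trans hright

lemma continuousOn_comp_two_mul_sub {g : ℝ → ℝ} (hT : 0 ≤ T)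
    (hg : ContinuousOn g (Icc 0 (2 * T))) : ContinuousOn (fun s => g (2 * T - s)) (Icc 0 T) :=
  hg.comp (by fun_prop) fun s hs => ⟨by linarith [hs.2], by linarith [hs.1]⟩

lemma integral_mul_evenExt {g : ℝ → ℝ} (hT : 0 ≤ T) (hg : ContinuousOn g (Icc 0 (2 * T)))
    (hf : IntervalIntegrable f volume 0 T) :
    ∫ s in (0:ℝ)..2 * T, g s * evenExt T f s = ∫ s in (0:ℝ)..T, (g s + g (2 * T - s)) * f s := by
  have hint : IntervalIntegrable (fun s => g s * evenExt T f s) volume 0 (2 * T) :=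
    (intervalIntegrable_evenExt hT hf).continuousOn_mul (by rwa [uIcc_of_le (by linarith)])
  have hsub : ∀ {c d}, 0 ≤ c → c ≤ d → d ≤ 2 * T →
      IntervalIntegrable (fun s => g s * evenExt T f s) volume c d := fun h₀ hcd hd =>
    hint.mono_set (by rw [uIcc_of_le hcd, uIcc_of_le (by linarith)]; exact Icc_subset_Icc h₀ hd)
  have hleft : ∫ s in (0:ℝ)..T, g s * evenExt T f s = ∫ s in (0:ℝ)..T, g s * f s :=
    intervalIntegral.integral_congr fun s hs => by
      rw [uIcc_of_le hT] at hs; rw [evenExt_of_le hs.2]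
  have hright : ∫ s in T..2 * T, g s * evenExt T f s = ∫ s in (0:ℝ)..T, g (2 * T - s) * f s := by
    have hfold := integral_comp_sub_left (fun s => g s * evenExt T f s) (2 * T) (a := 0) (b := T)
    rw [show 2 * T - T = T by ring, sub_zero] at hfold
    rw [← hfold]
    refine intervalIntegral.integral_congr fun s hs => ?_
    rw [uIcc_of_le hT] at hs
    simp only [evenExt_two_mul_sub_of_le hs.2]
  have hg₁ : ContinuousOn g (uIcc 0 T) := by
    rw [uIcc_of_le hT]; exact hg.mono (Icc_subset_Icc le_rfl (by linarith))
  have hg₂ : ContinuousOn (fun s => g (2 * T - s)) (uIcc 0 T) := by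
    rw [uIcc_of_le hT]; exact continuousOn_comp_two_mul_sub hT hg
  calc ∫ s in (0:ℝ)..2 * T, g s * evenExt T f s
      = (∫ s in (0:ℝ)..T, g s * evenExt T f s) + ∫ s in T..2 * T, g s * evenExt T f s :=
        (integral_add_adjacent_intervals (hsub le_rfl hT (by linarith))
          (hsub hT (by linarith) le_rfl)).symm
    _ = (∫ s in (0:ℝ)..T, g s * f s) + ∫ s in (0:ℝ)..T, g (2 * T - s) * f s := by
        rw [hleft, hright]
    _ = ∫ s in (0:ℝ)..T, (g s + g (2 * T - s)) * f s := by
        simp only [add_mul]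
        exact (intervalIntegral.integral_add (hf.continuousOn_mul hg₁)
          (hf.continuousOn_mul hg₂)).symm

end EvenExt

lemma eq_neg_of_hasDerivAt_of_symmetric {u u' : ℝ → ℝ} {L x : ℝ} (hL : 0 < L)
    (hu : ∀ y ∈ Icc 0 L, HasDerivAt u (u' y) y) (hsymm : ∀ y ∈ Icc 0 L, u (L - y) = u y)
    (hx : x ∈ Icc 0 L) : u' (L - x) = -u' x := by
  have hx' : L - x ∈ Icc 0 L := ⟨by linarith [hx.2], by linarith [hx.1]⟩
  have href : HasDerivWithinAt u (-u' (L - x)) (Icc 0 L) x :=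
    ((hu _ hx').comp_const_sub L x).hasDerivWithinAt.congr
      (fun y hy => (hsymm y hy).symm) (hsymm x hx).symm
  linarith [(uniqueDiffOn_Icc hL x hx).eq_deriv _ (hu x hx).hasDerivWithinAt href]

lemma PeriodicBC.reflect {L : ℝ} {u u' : ℝ → ℝ} (h : PeriodicBC L u u') :
    PeriodicBC L (fun x => u (L - x)) (fun x => -u' (L - x)) :=
  ⟨by simp [h.1], by simp [h.2]⟩

namespace IsSolIcc

variable {a σ u u' : ℝ → ℝ} {L : ℝ}

lemma continuousOn (h : IsSolIcc a σ L u u') : ContinuousOn u (Icc 0 L) :=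
  fun x hx => (h.1 x hx).continuousAt.continuousWithinAt

lemma intervalIntegrable_sub_mul (h : IsSolIcc a σ L u u') (hL : 0 ≤ L)
    (ha : IntervalIntegrable a volume 0 L) (hσ : IntervalIntegrable σ volume 0 L) :
    IntervalIntegrable (fun s => σ s - a s * u s) volume 0 L :=
  hσ.sub (ha.mul_continuousOn (by rw [uIcc_of_le hL]; exact h.continuousOn))

lemma restrict {a' σ' : ℝ → ℝ} {L' : ℝ} (h : IsSolIcc a σ L u u') (hL' : L' ≤ L)
    (ha : EqOn a' a (Icc 0 L')) (hσ : EqOn σ' σ (Icc 0 L')) : IsSolIcc a' σ' L' u u' := by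
  have hsub : Icc 0 L' ⊆ Icc 0 L := Icc_subset_Icc le_rfl hL'
  refine ⟨fun x hx => h.1 x (hsub hx), fun x hx => ?_⟩
  rw [h.2 x (hsub hx)]
  congr 1
  refine intervalIntegral.integral_congr fun s hs => ?_
  rw [uIcc_of_le hx.1] at hs
  have hs' : s ∈ Icc 0 L' := ⟨hs.1, hs.2.trans hx.2⟩
  simp only [ha hs', hσ hs']

lemma reflect (h : IsSolIcc a σ L u u') (hL : 0 ≤ L)
    (ha : IntervalIntegrable a volume 0 L) (hσ : IntervalIntegrable σ volume 0 L)
    (ha_symm : ∀ s, a (L - s) = a s) (hσ_symm : ∀ s, σ (L - s) = σ s) :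
    IsSolIcc a σ L (fun x => u (L - x)) (fun x => -u' (L - x)) := by
  have hmem : ∀ x ∈ Icc 0 L, L - x ∈ Icc 0 L :=
    fun x hx => ⟨by linarith [hx.2], by linarith [hx.1]⟩
  refine ⟨fun x hx => (h.1 _ (hmem x hx)).comp_const_sub L x, fun x hx => ?_⟩
  set F := fun s => σ s - a s * u s
  have hF : IntervalIntegrable F volume 0 L := h.intervalIntegrable_sub_mul hL ha hσ
  have hflip : ∫ s in (0:ℝ)..x, (σ s - a s * u (L - s)) = ∫ s in L - x..L, F s := by
    simpa [F, ha_symm, hσ_symm] using integral_comp_sub_left F L (a := 0) (b := x)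
  have hF' : IntervalIntegrable F volume 0 (L - x) := hF.mono_set (by
    rw [uIcc_of_le hL, uIcc_of_le (hmem x hx).1]
    exact Icc_subset_Icc le_rfl (hmem x hx).2)
  simp only [sub_zero]
  rw [hflip, h.2 _ (hmem x hx), h.2 L ⟨hL, le_rfl⟩,
    ← integral_interval_sub_left hF hF']
  ring

end IsSolIcc

lemma eqOn_of_forall_integral_mul_eq {f g : ℝ → ℝ} {a b : ℝ} (hab : a < b)
    (hf : ContinuousOn f (Icc a b)) (hg : ContinuousOn g (Icc a b))
    (h : ∀ σ, IntervalIntegrable σ volume a b →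
      ∫ x in a..b, f x * σ x = ∫ x in a..b, g x * σ x) :
    EqOn f g (Icc a b) := by
  intro c hc
  by_contra hne
  set d := fun x => f x - g x
  have hd : ContinuousOn d (Icc a b) := hf.sub hg
  have hpos : 0 < ∫ x in a..b, d x * d x :=
    integral_pos hab (hd.mul hd) (fun x _ => mul_self_nonneg _)
      ⟨c, hc, mul_self_pos.2 (sub_ne_zero.2 hne)⟩
  have hmul : ∀ k, ContinuousOn k (Icc a b) → IntervalIntegrable (fun x => k x * d x) volume a b :=
    fun k hk => (hk.mul hd).intervalIntegrable_of_Icc hab.le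
  have hzero : ∫ x in a..b, d x * d x = 0 :=
    calc ∫ x in a..b, d x * d x = ∫ x in a..b, (f x * d x - g x * d x) := by
          simp only [d, sub_mul]
      _ = 0 := by
          rw [intervalIntegral.integral_sub (hmul f hf) (hmul g hg),
            h d (hd.intervalIntegrable_of_Icc hab.le), sub_self]
  linarith

lemma isSolIcc_neumann_of_periodic_evenExt {T : ℝ} (hT : 0 < T) {a σ v v' : ℝ → ℝ}
    {G : ℝ → ℝ → ℝ} (ha : IntervalIntegrable a volume 0 T)
    (hσ : IntervalIntegrable σ volume 0 T)
    (hG : IsGreen (evenExt T a) (2 * T) (PeriodicBC (2 * T)) G)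
    (hsol : IsSolIcc (evenExt T a) (evenExt T σ) (2 * T) v v')
    (hbc : PeriodicBC (2 * T) v v') :
    IsSolIcc a σ T v v' ∧ NeumannBC T v v' := by
  have hσ' := intervalIntegrable_evenExt hT.le hσ
  have hrefl := hsol.reflect (by linarith) (intervalIntegrable_evenExt hT.le ha) hσ'
    evenExt_two_mul_sub evenExt_two_mul_sub
  have hsymm : ∀ x ∈ Icc 0 (2 * T), v (2 * T - x) = v x := fun x hx =>
    ((hG _ hσ').2 _ _ _ _ hsol hbc hrefl hbc.reflect x hx).symm
  have hodd : ∀ x ∈ Icc 0 (2 * T), v' (2 * T - x) = -v' x :=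
    fun x => eq_neg_of_hasDerivAt_of_symmetric (by linarith) hsol.1 hsymm
  have hodd₀ := hodd (2 * T) ⟨by linarith, le_rfl⟩
  have hoddT := hodd T ⟨hT.le, by linarith⟩
  rw [sub_self] at hodd₀
  rw [show 2 * T - T = T by ring] at hoddT
  exact ⟨hsol.restrict (by linarith) (fun s hs => (evenExt_of_le hs.2).symm)
    (fun s hs => (evenExt_of_le hs.2).symm), by linarith [hbc.2], by linarith⟩

lemma integral_neumannGreen_mul_eq {T : ℝ} (hT : 0 < T) {a σ : ℝ → ℝ} {GN GP : ℝ → ℝ → ℝ}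
    (ha : IntervalIntegrable a volume 0 T) (hGN : IsGreen a T (NeumannBC T) GN)
    (hGP : IsGreen (evenExt T a) (2 * T) (PeriodicBC (2 * T)) GP)
    (hσ : IntervalIntegrable σ volume 0 T) {t : ℝ} (ht : t ∈ Icc 0 T) :
    ∫ s in (0:ℝ)..T, GN t s * σ s = ∫ s in (0:ℝ)..2 * T, GP t s * evenExt T σ s := by
  obtain ⟨v', hsol, hbc⟩ := (hGP _ (intervalIntegrable_evenExt hT.le hσ)).1
  obtain ⟨hsolN, hbcN⟩ := isSolIcc_neumann_of_periodic_evenExt hT ha hσ hGP hsol hbc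
  obtain ⟨w', hsolN', hbcN'⟩ := (hGN σ hσ).1
  exact (hGN σ hσ).2 _ _ _ _ hsolN' hbcN' hsolN hbcN t ht

/-- `G_N(t,s) = G_P(t,s) + G_P(t, 2T−s)` on `[0,T]²`, where `G_N` is
the Neumann Green's function on `[0,T]` and `G_P` the periodic one on `[0,2T]`
for the even-extended potential. -/
theorem statement5 (T : ℝ) (hT : 0 < T) (a : ℝ → ℝ) (GN GP : ℝ → ℝ → ℝ)
    (ha : IntervalIntegrable a volume 0 T)
    (hcN : ContinuousOn (fun p : ℝ × ℝ => GN p.1 p.2) (Icc (0:ℝ) T ×ˢ Icc (0:ℝ) T))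
    (hcP : ContinuousOn (fun p : ℝ × ℝ => GP p.1 p.2)
      (Icc (0:ℝ) (2 * T) ×ˢ Icc (0:ℝ) (2 * T)))
    (hGN : IsGreen a T (NeumannBC T) GN)
    (hGP : IsGreen (evenExt T a) (2 * T) (PeriodicBC (2 * T)) GP) :
    ∀ t ∈ Icc (0:ℝ) T, ∀ s ∈ Icc (0:ℝ) T,
      GN t s = GP t s + GP t (2 * T - s) := by
  intro t ht
  have hGNt : ContinuousOn (GN t) (Icc 0 T) := hcN.uncurry_left t ht
  have htP : t ∈ Icc (0:ℝ) (2 * T) := ⟨ht.1, by linarith [ht.2]⟩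
  have hGPt : ContinuousOn (GP t) (Icc 0 (2 * T)) := hcP.uncurry_left t htP
  refine eqOn_of_forall_integral_mul_eq hT hGNt
    ((hGPt.mono (Icc_subset_Icc le_rfl (by linarith))).add
      (continuousOn_comp_two_mul_sub hT.le hGPt)) fun σ hσ => ?_
  rw [integral_neumannGreen_mul_eq hT ha hGN hGP hσ ht, integral_mul_evenExt hT.le hGPt hσ]
end

section
/- Assume L[a]u = u''+a·u is nonresonant and self-adjoint on a Banach space X ⊂ W^{2,1}(0,T) with Green's function G satisfying G(t,s)=G(s,t) on [0,T]². If G does not change sign on [0,T]² and G(t₀,s₀)=0 at some point with 0 < t₀, s₀ < T and t₀ ≠ s₀, then a contradiction arises; i.e., any zero (t₀,s₀) of a symmetric, one-signed Green's function must satisfy t₀=s₀, or t₀ ∈ {0,T}, or s₀ ∈ {0,T}. -/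
open Set MeasureTheory intervalIntegral

/-- `u` is a Carathéodory solution of the homogeneous equation `u'' + a u = 0` on
`[c,d]`, with `u'` its (one-sided at the endpoints) derivative. -/
def IsSolPiece (a : ℝ → ℝ) (c d : ℝ) (u u' : ℝ → ℝ) : Prop :=
  (∀ t ∈ Icc c d, HasDerivWithinAt u (u' t) (Icc c d) t) ∧
  (∀ t ∈ Icc c d, u' t = u' c + ∫ s in c..t, (-(a s * u s)))

/-!
A solution of `u'' + a u = 0` with `a ∈ L¹` and a double zero vanishes identically from that
point on (a Grönwall argument). If `G(·, s)` is one-signed and vanishes at an interior point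
`t`, the zero is double, so the whole column vanishes beyond `t` on its side of the diagonal.
By symmetry a zero of `G` at `(t, s)` is also a zero at `(s, t)`, so zeros spread from column
to column: from a zero with `0 < t₀ < s₀ < T` one reaches a column `s ∈ (s₀, T)` on which
`G(·, s)` vanishes on both sides of the diagonal near `s`. Then both one-sided derivatives of
`G(·, s)` at `s` are zero, contradicting their unit jump.
-/

open Filter Topology

namespace IsSolPiece

variable {a u u' : ℝ → ℝ} {c d : ℝ}

theorem continuousOn (h : IsSolPiece a c d u u') : ContinuousOn u (Icc c d) :=
  fun t ht => (h.1 t ht).continuousWithinAt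

theorem intervalIntegrable_neg_mul (h : IsSolPiece a c d u u')
    (ha : IntervalIntegrable a volume c d) (hcd : c ≤ d) :
    IntervalIntegrable (fun s => -(a s * u s)) volume c d :=
  (ha.mul_continuousOn (by rw [uIcc_of_le hcd]; exact h.continuousOn)).neg

theorem continuousOn_deriv (h : IsSolPiece a c d u u')
    (ha : IntervalIntegrable a volume c d) (hcd : c ≤ d) : ContinuousOn u' (Icc c d) := by
  have hprim := continuousOn_primitive_interval' (h.intervalIntegrable_neg_mul ha hcd)
    left_mem_uIcc
  rw [uIcc_of_le hcd] at hprim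
  exact (continuousOn_const.add hprim).congr h.2

theorem mono (h : IsSolPiece a c d u u') (ha : IntervalIntegrable a volume c d) {m n : ℝ}
    (hcm : c ≤ m) (hmn : m ≤ n) (hnd : n ≤ d) : IsSolPiece a m n u u' := by
  have hsub : Icc m n ⊆ Icc c d := Icc_subset_Icc hcm hnd
  have hint : ∀ r ∈ Icc c d, IntervalIntegrable (fun s => -(a s * u s)) volume c r :=
    fun r hr => (h.intervalIntegrable_neg_mul ha (hr.1.trans hr.2)).mono_set
      (uIcc_subset_uIcc left_mem_uIcc (Icc_subset_uIcc hr))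
  refine ⟨fun t ht => (h.1 t (hsub ht)).mono hsub, fun t ht => ?_⟩
  rw [h.2 t (hsub ht), h.2 m (hsub ⟨le_rfl, hmn⟩),
    ← integral_interval_sub_left (hint t (hsub ht)) (hint m (hsub ⟨le_rfl, hmn⟩))]
  ring

theorem sub_eq_integral_deriv (h : IsSolPiece a c d u u')
    (ha : IntervalIntegrable a volume c d) (hcd : c ≤ d) : u d - u c = ∫ s in c..d, u' s := by
  refine (integral_eq_sub_of_hasDeriv_right_of_le hcd h.continuousOn (fun x hx => ?_)
    ((h.continuousOn_deriv ha hcd).intervalIntegrable_of_Icc hcd)).symm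
  exact ((h.1 x (Ioo_subset_Icc_self hx)).hasDerivAt (Icc_mem_nhds hx.1 hx.2)).hasDerivWithinAt

theorem abs_add_abs_deriv_le (h : IsSolPiece a c d u u')
    (ha : IntervalIntegrable a volume c d) (hu : u c = 0) (hu' : u' c = 0) {K : ℝ}
    (hK : ∀ t ∈ Icc c d, |u t| ≤ K ∧ |u' t| ≤ K) {t : ℝ} (ht : t ∈ Icc c d) :
    |u t| + |u' t| ≤ K * ∫ s in c..d, (1 + |a s|) := by
  have hcd : c ≤ d := ht.1.trans ht.2
  have hsol := h.mono ha le_rfl ht.1 ht.2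
  have hat : IntervalIntegrable a volume c t :=
    ha.mono_set (uIcc_subset_uIcc left_mem_uIcc (Icc_subset_uIcc ht))
  have hint₁ : IntervalIntegrable (fun s => |u' s|) volume c t :=
    (((h.continuousOn_deriv ha hcd).mono (Icc_subset_Icc le_rfl ht.2)).intervalIntegrable_of_Icc
      ht.1).abs
  have hint₂ : IntervalIntegrable (fun s => |-(a s * u s)|) volume c t :=
    (hsol.intervalIntegrable_neg_mul hat ht.1).abs
  have hw : IntervalIntegrable (fun s => 1 + |a s|) volume c d :=
    intervalIntegrable_const.add ha.abs
  calc |u t| + |u' t| = |∫ s in c..t, u' s| + |∫ s in c..t, -(a s * u s)| := by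
        rw [← hsol.sub_eq_integral_deriv hat ht.1, hu, sub_zero, h.2 t ht, hu', zero_add]
    _ ≤ ∫ s in c..t, (|u' s| + |-(a s * u s)|) := by
        rw [integral_add hint₁ hint₂]
        exact add_le_add (abs_integral_le_integral_abs ht.1) (abs_integral_le_integral_abs ht.1)
    _ ≤ ∫ s in c..t, (1 + |a s|) * K := by
        refine integral_mono_on ht.1 (hint₁.add hint₂) ((hw.mono_set (uIcc_subset_uIcc
          left_mem_uIcc (Icc_subset_uIcc ht))).mul_const K) fun s hs => ?_
        have hs' : s ∈ Icc c d := ⟨hs.1, hs.2.trans ht.2⟩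
        rw [abs_neg, abs_mul, add_mul, one_mul]
        exact add_le_add (hK s hs').2 (mul_le_mul_of_nonneg_left (hK s hs').1 (abs_nonneg _))
    _ ≤ ∫ s in c..d, (1 + |a s|) * K := by
        refine integral_mono_interval le_rfl ht.1 ht.2 (ae_of_all _ fun s => ?_)
          (hw.mul_const K)
        exact mul_nonneg (by positivity) ((abs_nonneg _).trans (hK t ht).1)
    _ = K * ∫ s in c..d, (1 + |a s|) := by rw [intervalIntegral.integral_mul_const, mul_comm]

theorem eqOn_zero_of_integral_lt_one (h : IsSolPiece a c d u u')
    (ha : IntervalIntegrable a volume c d) (hcd : c ≤ d) (hu : u c = 0) (hu' : u' c = 0)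
    (hsmall : ∫ s in c..d, (1 + |a s|) < 1) : ∀ t ∈ Icc c d, u t = 0 ∧ u' t = 0 := by
  obtain ⟨z, hz, hmax⟩ := isCompact_Icc.exists_isMaxOn (nonempty_Icc.2 hcd)
    (h.continuousOn.abs.add (h.continuousOn_deriv ha hcd).abs)
  set K := |u z| + |u' z|
  have hK : ∀ t ∈ Icc c d, |u t| ≤ K ∧ |u' t| ≤ K := fun t ht =>
    have : |u t| + |u' t| ≤ K := isMaxOn_iff.mp hmax t ht
    ⟨by linarith [abs_nonneg (u' t)], by linarith [abs_nonneg (u t)]⟩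
  have hK0 : K ≤ 0 := by
    nlinarith [h.abs_add_abs_deriv_le ha hu hu' hK hz, abs_nonneg (u z), abs_nonneg (u' z)]
  intro t ht
  exact ⟨abs_nonpos_iff.mp ((hK t ht).1.trans hK0), abs_nonpos_iff.mp ((hK t ht).2.trans hK0)⟩

theorem eqOn_zero (h : IsSolPiece a c d u u') (ha : IntervalIntegrable a volume c d)
    (hu : u c = 0) (hu' : u' c = 0) : ∀ t ∈ Icc c d, u t = 0 ∧ u' t = 0 := by
  rcases lt_or_ge d c with hdc | hcd
  · simp [Icc_eq_empty_of_lt hdc]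
  let S : Set ℝ := (fun t => (u t, u' t)) ⁻¹' {0}
  have hclosed : IsClosed (S ∩ Icc c d) := by
    rw [inter_comm]
    exact (h.continuousOn.prodMk (h.continuousOn_deriv ha hcd)).preimage_isClosed_of_isClosed
      isClosed_Icc isClosed_singleton
  suffices Icc c d ⊆ S from fun t ht => Prod.mk_eq_zero.mp (this ht)
  refine hclosed.Icc_subset_of_forall_mem_nhdsWithin (Prod.mk_eq_zero.mpr ⟨hu, hu'⟩) ?_
  rintro x ⟨hxS, hcx, hxd⟩
  have hax : IntervalIntegrable a volume x d :=
    ha.mono_set (uIcc_subset_uIcc (Icc_subset_uIcc ⟨hcx, hxd.le⟩) right_mem_uIcc)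
  have hprim : ContinuousWithinAt (fun t => ∫ s in x..t, (1 + |a s|)) (Icc x d) x := by
    have hw : IntervalIntegrable (fun s => 1 + |a s|) volume x d :=
      intervalIntegrable_const.add hax.abs
    have := continuousOn_primitive_interval' hw left_mem_uIcc
    rw [uIcc_of_le hxd.le] at this
    exact this x (left_mem_Icc.mpr hxd.le)
  -- the zero set extends to the right of each of its points `x` as long as `∫ₓᵗ (1 + |a|) < 1`
  have hsmall : ∀ᶠ t in 𝓝[>] x, (∫ s in x..t, (1 + |a s|)) < 1 ∧ t ∈ Ioc x d := by
    have hlt : ∀ᶠ t in 𝓝[Icc x d] x, (∫ s in x..t, (1 + |a s|)) < 1 :=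
      hprim.eventually_lt continuousWithinAt_const (by simp)
    exact Eventually.and (nhdsWithin_le_of_mem (Icc_mem_nhdsGT hxd) hlt) (Ioc_mem_nhdsGT hxd)
  obtain ⟨t₁, hsmall₁, hxt₁, ht₁d⟩ := hsmall.exists
  refine mem_of_superset (Icc_mem_nhdsGT hxt₁) fun t ht => Prod.mk_eq_zero.mpr ?_
  exact (h.mono ha hcx hxt₁.le ht₁d).eqOn_zero_of_integral_lt_one
    (hax.mono_set (uIcc_subset_uIcc left_mem_uIcc (Icc_subset_uIcc ⟨hxt₁.le, ht₁d⟩)))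
    hxt₁.le (Prod.mk_eq_zero.mp hxS).1 (Prod.mk_eq_zero.mp hxS).2 hsmall₁ t ht

theorem eqOn_zero_of_one_signed (h : IsSolPiece a c d u u')
    (ha : IntervalIntegrable a volume c d) {x : ℝ} (hx : x ∈ Ioo c d)
    (hsgn : (∀ t ∈ Icc c d, 0 ≤ u t) ∨ (∀ t ∈ Icc c d, u t ≤ 0)) (hux : u x = 0) :
    ∀ t ∈ Icc x d, u t = 0 ∧ u' t = 0 := by
  have hnhds : Icc c d ∈ 𝓝 x := Icc_mem_nhds hx.1 hx.2
  have hextr : IsLocalExtr u x := hsgn.imp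
    (fun hpos => mem_of_superset hnhds fun t ht => hux ▸ hpos t ht)
    (fun hneg => mem_of_superset hnhds fun t ht => hux ▸ hneg t ht)
  have hu'x : u' x = 0 :=
    hextr.hasDerivAt_eq_zero ((h.1 x (Ioo_subset_Icc_self hx)).hasDerivAt hnhds)
  exact (h.mono ha hx.1.le hx.2.le le_rfl).eqOn_zero
    (ha.mono_set (uIcc_subset_uIcc (Icc_subset_uIcc (Ioo_subset_Icc_self hx)) right_mem_uIcc))
    hux hu'x

end IsSolPiece

theorem green_ne_zero_of_lt {T : ℝ} {a : ℝ → ℝ} {G Gle Gri : ℝ → ℝ → ℝ}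
    (ha : IntervalIntegrable a volume 0 T)
    (hsym : ∀ t ∈ Icc (0:ℝ) T, ∀ s ∈ Icc (0:ℝ) T, G t s = G s t)
    (hsign : (∀ t ∈ Icc (0:ℝ) T, ∀ s ∈ Icc (0:ℝ) T, 0 ≤ G t s) ∨
             (∀ t ∈ Icc (0:ℝ) T, ∀ s ∈ Icc (0:ℝ) T, G t s ≤ 0))
    (hleft : ∀ s ∈ Icc (0:ℝ) T, IsSolPiece a 0 s (fun t => G t s) (fun t => Gle t s))
    (hright : ∀ s ∈ Icc (0:ℝ) T, IsSolPiece a s T (fun t => G t s) (fun t => Gri t s))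
    (hjump : ∀ s ∈ Ioo (0:ℝ) T, Gri s s - Gle s s = 1)
    {t₀ s₀ : ℝ} (ht₀ : 0 < t₀) (hts : t₀ < s₀) (hs₀ : s₀ < T) :
    G t₀ s₀ ≠ 0 := by
  intro hzero
  have haI : ∀ {c d}, 0 ≤ c → c ≤ d → d ≤ T → IntervalIntegrable a volume c d :=
    fun hc hcd hd => ha.mono_set (uIcc_subset_uIcc (Icc_subset_uIcc ⟨hc, hcd.trans hd⟩)
      (Icc_subset_uIcc ⟨hc.trans hcd, hd⟩))
  have hcol : ∀ {s c d}, s ∈ Icc (0:ℝ) T → 0 ≤ c → d ≤ T →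
      (∀ t ∈ Icc c d, 0 ≤ G t s) ∨ (∀ t ∈ Icc c d, G t s ≤ 0) := fun hs hc hd =>
    hsign.imp (fun h t ht => h t ⟨hc.trans ht.1, ht.2.trans hd⟩ _ hs)
      (fun h t ht => h t ⟨hc.trans ht.1, ht.2.trans hd⟩ _ hs)
  have vanish_left : ∀ {t s}, 0 < t → t < s → s ≤ T → G t s = 0 →
      ∀ r ∈ Icc t s, G r s = 0 ∧ Gle r s = 0 := fun {t s} h0 hts hsT hz =>
    have hs : s ∈ Icc (0:ℝ) T := ⟨(h0.trans hts).le, hsT⟩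
    (hleft s hs).eqOn_zero_of_one_signed (haI le_rfl hs.1 hsT) ⟨h0, hts⟩
      (hcol hs le_rfl hsT) hz
  have vanish_right : ∀ {t s}, 0 ≤ s → s < t → t < T → G t s = 0 →
      ∀ r ∈ Icc t T, G r s = 0 ∧ Gri r s = 0 := fun {t s} h0 hst htT hz =>
    have hs : s ∈ Icc (0:ℝ) T := ⟨h0, (hst.trans htT).le⟩
    (hright s hs).eqOn_zero_of_one_signed (haI h0 hs.2 le_rfl) ⟨hst, htT⟩
      (hcol hs h0 le_rfl) hz
  obtain ⟨c₁, hc₁⟩ := nonempty_Ioo.2 hts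
  have hcols_mid : ∀ c ∈ Ioo t₀ s₀, ∀ r ∈ Icc s₀ T, G r c = 0 := fun c hc r hr => by
    have hcI : c ∈ Icc (0:ℝ) T := ⟨(ht₀.trans hc.1).le, (hc.2.trans hs₀).le⟩
    refine (vanish_right hcI.1 hc.2 hs₀ ?_ r hr).1
    rw [hsym s₀ ⟨(ht₀.trans hts).le, hs₀.le⟩ c hcI]
    exact (vanish_left ht₀ hts hs₀.le hzero c ⟨hc.1.le, hc.2.le⟩).1
  have hcols_late : ∀ s ∈ Ioo s₀ T, ∀ r ∈ Icc c₁ s, G r s = 0 ∧ Gle r s = 0 :=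
    fun s hs => by
    refine vanish_left (ht₀.trans hc₁.1) (hc₁.2.trans hs.1) hs.2.le ?_
    rw [hsym c₁ ⟨(ht₀.trans hc₁.1).le, (hc₁.2.trans hs₀).le⟩ s
      ⟨(ht₀.trans (hts.trans hs.1)).le, hs.2.le⟩]
    exact hcols_mid c₁ hc₁ s ⟨hs.1.le, hs.2.le⟩
  obtain ⟨s, hs⟩ := nonempty_Ioo.2 hs₀
  have hsI : s ∈ Icc (0:ℝ) T := ⟨(ht₀.trans (hts.trans hs.1)).le, hs.2.le⟩
  have hGle : Gle s s = 0 := (hcols_late s hs s ⟨(hc₁.2.trans hs.1).le, le_rfl⟩).2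
  have hG : ∀ r ∈ Ico s T, G r s = 0 := fun r hr => by
    have hr' : r ∈ Ioo s₀ T := ⟨hs.1.trans_le hr.1, hr.2⟩
    rw [hsym r ⟨hsI.1.trans hr.1, hr.2.le⟩ s hsI]
    exact (hcols_late r hr' s ⟨(hc₁.2.trans hs.1).le, hr.1⟩).1
  have hGri : Gri s s = 0 := by
    have hmem : s ∈ Ico s T := ⟨le_rfl, hs.2⟩
    refine (uniqueDiffOn_Ico s T s hmem).eq_deriv _
      (((hright s hsI).1 s ⟨le_rfl, hs.2.le⟩).mono Ico_subset_Icc_self) ?_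
    exact (hasDerivWithinAt_const s _ 0).congr hG (hG s hmem)
  have hjump_s := hjump s ⟨ht₀.trans (hts.trans hs.1), hs.2⟩
  rw [hGri, hGle] at hjump_s
  norm_num at hjump_s

theorem statement12_general (T : ℝ) (a : ℝ → ℝ) (G Gle Gri : ℝ → ℝ → ℝ)
    (ha : IntervalIntegrable a volume 0 T)
    (hsym : ∀ t ∈ Icc (0:ℝ) T, ∀ s ∈ Icc (0:ℝ) T, G t s = G s t)
    (hsign : (∀ t ∈ Icc (0:ℝ) T, ∀ s ∈ Icc (0:ℝ) T, 0 ≤ G t s) ∨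
             (∀ t ∈ Icc (0:ℝ) T, ∀ s ∈ Icc (0:ℝ) T, G t s ≤ 0))
    (hleft : ∀ s ∈ Icc (0:ℝ) T, IsSolPiece a 0 s (fun t => G t s) (fun t => Gle t s))
    (hright : ∀ s ∈ Icc (0:ℝ) T, IsSolPiece a s T (fun t => G t s) (fun t => Gri t s))
    (hjump : ∀ s ∈ Ioo (0:ℝ) T, Gri s s - Gle s s = 1)
    (t₀ s₀ : ℝ) (ht₀ : t₀ ∈ Icc (0:ℝ) T) (hs₀ : s₀ ∈ Icc (0:ℝ) T)
    (hzero : G t₀ s₀ = 0) :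
    t₀ = s₀ ∨ t₀ = 0 ∨ t₀ = T ∨ s₀ = 0 ∨ s₀ = T := by
  by_contra! hcon
  obtain ⟨hne, ht0, htT, hs0, hsT⟩ := hcon
  rcases hne.lt_or_gt with hlt | hgt
  · exact green_ne_zero_of_lt ha hsym hsign hleft hright hjump
      (ht₀.1.lt_of_ne' ht0) hlt (hs₀.2.lt_of_ne hsT) hzero
  · exact green_ne_zero_of_lt ha hsym hsign hleft hright hjump
      (hs₀.1.lt_of_ne' hs0) hgt (ht₀.2.lt_of_ne htT) (hsym t₀ ht₀ s₀ hs₀ ▸ hzero)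

/-- an interior zero of a continuous, symmetric, one-signed Green's
function (solving `u'' + a u = 0` on each side of the diagonal, with unit jump of
`∂G/∂t` across it) must lie on the diagonal or on the boundary of `[0,T]²`. -/
theorem statement12 (T : ℝ) (hT : 0 < T) (a : ℝ → ℝ) (G Gle Gri : ℝ → ℝ → ℝ)
    (ha : IntervalIntegrable a volume 0 T)
    (hcont : ContinuousOn (fun p : ℝ × ℝ => G p.1 p.2) (Icc (0:ℝ) T ×ˢ Icc (0:ℝ) T))
    (hsym : ∀ t ∈ Icc (0:ℝ) T, ∀ s ∈ Icc (0:ℝ) T, G t s = G s t)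
    (hsign : (∀ t ∈ Icc (0:ℝ) T, ∀ s ∈ Icc (0:ℝ) T, 0 ≤ G t s) ∨
             (∀ t ∈ Icc (0:ℝ) T, ∀ s ∈ Icc (0:ℝ) T, G t s ≤ 0))
    (hleft : ∀ s ∈ Icc (0:ℝ) T, IsSolPiece a 0 s (fun t => G t s) (fun t => Gle t s))
    (hright : ∀ s ∈ Icc (0:ℝ) T, IsSolPiece a s T (fun t => G t s) (fun t => Gri t s))
    (hjump : ∀ s ∈ Ioo (0:ℝ) T, Gri s s - Gle s s = 1)
    (t₀ s₀ : ℝ) (ht₀ : t₀ ∈ Icc (0:ℝ) T) (hs₀ : s₀ ∈ Icc (0:ℝ) T)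
    (hzero : G t₀ s₀ = 0) :
    t₀ = s₀ ∨ t₀ = 0 ∨ t₀ = T ∨ s₀ = 0 ∨ s₀ = T :=
  statement12_general T a G Gle Gri ha hsym hsign hleft hright hjump t₀ s₀ ht₀ hs₀ hzero
end

section
/- Fix T > 0 and m with 0 < mT < π/2. Define on [0,T]² the constant-coefficient Green's functions G_N(t,s) = cos(m·min(t,s))·cos(m·(T−max(t,s)))/(m·sin(mT)) and G_D(t,s) = sin(m·min(t,s))·sin(m·(max(t,s)−T))/(m·sin(mT)). Then G_N(t,s) ≥ −G_D(t,s) ≥ 0 for all (t,s) ∈ [0,T]×[0,T]. -/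
open Set MeasureTheory intervalIntegral

/-- The constant-coefficient Neumann Green's function (min/max form). -/
noncomputable def GNm (T m : ℝ) : ℝ → ℝ → ℝ := fun t s =>
  Real.cos (m * min t s) * Real.cos (m * (T - max t s)) / (m * Real.sin (m * T))

/-- The constant-coefficient Dirichlet Green's function (min/max form). -/
noncomputable def GDm (T m : ℝ) : ℝ → ℝ → ℝ := fun t s =>
  Real.sin (m * min t s) * Real.sin (m * (max t s - T)) / (m * Real.sin (m * T))

/-! With `a = m·min(t,s)` and `b = m·(T − max(t,s))`, both Green's functions have the positive
denominator `m·sin(mT)`, and their numerators satisfy `cos a cos b − sin a sin b = cos (a + b) ≥ 0`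
and `sin a sin b ≥ 0`, since `0 ≤ a + b ≤ mT < π/2`. -/

open Real

lemma neg_GDm (T m t s : ℝ) :
    -GDm T m t s = sin (m * min t s) * sin (m * (T - max t s)) / (m * sin (m * T)) := by
  rw [GDm, ← neg_sub T, mul_neg, sin_neg, mul_neg, neg_div, neg_neg]

lemma sin_mul_sin_le_cos_mul_cos {a b : ℝ} (h : 0 ≤ cos (a + b)) :
    sin a * sin b ≤ cos a * cos b := by
  rw [cos_add] at h
  linarith

lemma sin_mul_sin_nonneg_of_add_le_pi {a b : ℝ} (ha : 0 ≤ a) (hb : 0 ≤ b) (hab : a + b ≤ π) :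
    0 ≤ sin a * sin b :=
  mul_nonneg (sin_nonneg_of_nonneg_of_le_pi ha (by linarith))
    (sin_nonneg_of_nonneg_of_le_pi hb (by linarith))

/-- for `0 < mT < π/2` the comparison `G_N ≥ −G_D ≥ 0` holds on
`[0,T]²`. -/
theorem statement15 (T m : ℝ) (hT : 0 < T) (hm : 0 < m)
    (hmT : m * T < Real.pi / 2) :
    ∀ t ∈ Icc (0:ℝ) T, ∀ s ∈ Icc (0:ℝ) T,
      GNm T m t s ≥ -GDm T m t s ∧ -GDm T m t s ≥ 0 := by
  intro t ht s hs
  have hden : 0 < m * sin (m * T) :=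
    mul_pos hm (sin_pos_of_pos_of_lt_pi (by positivity) (by linarith [pi_pos]))
  have ha : 0 ≤ m * min t s := mul_nonneg hm.le (le_min ht.1 hs.1)
  have hb : 0 ≤ m * (T - max t s) := mul_nonneg hm.le (sub_nonneg.2 (max_le ht.2 hs.2))
  have hab : m * min t s + m * (T - max t s) ≤ m * T := by
    nlinarith [min_le_max (a := t) (b := s)]
  rw [neg_GDm]
  refine ⟨div_le_div_of_nonneg_right (sin_mul_sin_le_cos_mul_cos ?_) hden.le,
    div_nonneg (sin_mul_sin_nonneg_of_add_le_pi ha hb (by linarith [pi_pos])) hden.le⟩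
  exact cos_nonneg_of_mem_Icc ⟨by linarith [pi_pos], by linarith⟩
end
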